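/- McDiarmid's inequality: Let f : X₁ × ... × X_N → ℝ satisfy the bounded-differences property with constants c₁,...,c_N (changing the k-th coordinate changes f by at most c_k). Then for independent random variables ξ₁,...,ξ_N and any ε ≥ 0, Pr(|f(ξ₁,...,ξ_N) - E[f(ξ₁,...,ξ_N)]| ≥ ε) ≤ 2·exp(-2ε²/Σ_n c_n²). -/

import Mathlib

/-!
Under the product law, split `f - 𝔼 f = (m - 𝔼 m) + (f - m)`, where `m x₀` is the mean of `f` over
the remaining coordinates with the first one fixed at `x₀`. Bounded differences confine `m` to an
interval of length `c₀`, so by Hoeffding's lemma `m - 𝔼 m` is sub-Gaussian with variance proxy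
`c₀² / 4`; by induction on the number of coordinates every section of `f - m` is sub-Gaussian with
proxy `∑ₖ₌₁ cₖ² / 4`, and the proxies add under the product measure. Independence identifies the law
of `(ξₖ)ₖ` with the product of the marginals, and the Chernoff bound applied to both tails
finishes.
-/

open MeasureTheory ProbabilityTheory Real
open scoped NNReal

def HasBoundedDifferences {ι : Type*} [DecidableEq ι] {X : ι → Type*} (f : (∀ i, X i) → ℝ)
    (c : ι → ℝ) : Prop :=
  ∀ x i (y : X i), |f x - f (Function.update x i y)| ≤ c i

lemma HasBoundedDifferences.comp_insertNth {n : ℕ} {X : Fin (n + 1) → Type*}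
    {f : (∀ i, X i) → ℝ} {c : Fin (n + 1) → ℝ} (hf : HasBoundedDifferences f c) (p : Fin (n + 1)) (a : X p) :
    HasBoundedDifferences (fun w => f (p.insertNth a w)) (fun j => c (p.succAbove j)) :=
  fun w j y => by simpa using hf (p.insertNth a w) (p.succAbove j) y

lemma exists_forall_mem_Icc_of_forall_sub_le {α : Type*} {m : α → ℝ} {c : ℝ}
    (h : ∀ x y, m x - m y ≤ c) : ∃ a, ∀ x, m x ∈ Set.Icc a (a + c) := by
  rcases isEmpty_or_nonempty α with hα | ⟨⟨x₀⟩⟩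
  · exact ⟨0, fun x => isEmptyElim x⟩
  · have : Nonempty α := ⟨x₀⟩
    have hbdd : BddBelow (Set.range m) := ⟨m x₀ - c, by rintro _ ⟨y, rfl⟩; linarith [h x₀ y]⟩
    refine ⟨⨅ x, m x, fun x => ⟨ciInf_le hbdd x, ?_⟩⟩
    have : m x - c ≤ ⨅ y, m y := le_ciInf fun y => by linarith [h x y]
    linarith

namespace ProbabilityTheory.HasSubgaussianMGF

variable {Ω : Type*} [MeasurableSpace Ω] {μ : Measure Ω} {X : Ω → ℝ} {c : ℝ≥0}

lemma measure_abs_ge_le [IsFiniteMeasure μ] (h : HasSubgaussianMGF X c μ) {ε : ℝ} (hε : 0 ≤ ε) :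
    μ.real {ω | ε ≤ |X ω|} ≤ 2 * exp (-ε ^ 2 / (2 * c)) := by
  calc μ.real {ω | ε ≤ |X ω|}
      ≤ μ.real ({ω | ε ≤ X ω} ∪ {ω | ε ≤ (-X) ω}) :=
        measureReal_mono fun ω (hω : ε ≤ |X ω|) => le_abs.mp hω
    _ ≤ μ.real {ω | ε ≤ X ω} + μ.real {ω | ε ≤ (-X) ω} := measureReal_union_le _ _
    _ ≤ 2 * exp (-ε ^ 2 / (2 * c)) := by
      linarith [h.measure_ge_le hε, h.neg.measure_ge_le hε]

variable {α β : Type*} [MeasurableSpace α] [MeasurableSpace β] {μ : Measure α} {ν : Measure β}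
  [SFinite μ] [SFinite ν]

lemma add_prod {X : α → ℝ} {Y : α × β → ℝ} {cX cY : ℝ≥0} (hX : HasSubgaussianMGF X cX μ)
    (hYm : Measurable Y) (hY : ∀ a, HasSubgaussianMGF (fun b => Y (a, b)) cY ν) :
    HasSubgaussianMGF (fun p => X p.1 + Y p) (cX + cY) (μ.prod ν) := by
  have hint : ∀ t, Integrable (fun p => exp (t * (X p.1 + Y p))) (μ.prod ν) := by
    intro t
    simp_rw [mul_add, exp_add]
    have hmeas : AEStronglyMeasurable (fun p : α × β => exp (t * X p.1) * exp (t * Y p))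
        (μ.prod ν) :=
      ((hX.aemeasurable.comp_fst.const_mul t).exp.mul
        (hYm.const_mul t).exp.aemeasurable).aestronglyMeasurable
    refine (integrable_prod_iff hmeas).2 ⟨ae_of_all _ fun a =>
      ((hY a).integrable_exp_mul t).const_mul (exp (t * X a)), ?_⟩
    refine ((hX.integrable_exp_mul t).mul_const (exp (cY * t ^ 2 / 2))).mono'
      hmeas.norm.integral_prod_right' (ae_of_all _ fun a => ?_)
    rw [Real.norm_of_nonneg (integral_nonneg fun _ => norm_nonneg _)]
    simp only [norm_mul, Real.norm_of_nonneg (exp_pos _).le]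
    rw [integral_const_mul]
    exact mul_le_mul_of_nonneg_left ((hY a).mgf_le t) (exp_pos _).le
  refine ⟨hint, fun t => ?_⟩
  calc mgf (fun p => X p.1 + Y p) (μ.prod ν) t
      = ∫ a, exp (t * X a) * mgf (fun b => Y (a, b)) ν t ∂μ := by
        rw [mgf, integral_prod _ (hint t)]
        simp_rw [mul_add, exp_add, integral_const_mul]
        rfl
    _ ≤ ∫ a, exp (t * X a) * exp (cY * t ^ 2 / 2) ∂μ := by
        refine integral_mono_of_nonneg (ae_of_all _ fun a => mul_nonneg (exp_pos _).le mgf_nonneg)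
          ((hX.integrable_exp_mul t).mul_const _) (ae_of_all _ fun a => ?_)
        exact mul_le_mul_of_nonneg_left ((hY a).mgf_le t) (exp_pos _).le
    _ ≤ exp (cX * t ^ 2 / 2) * exp (cY * t ^ 2 / 2) := by
        rw [integral_mul_const]
        gcongr
        exact hX.mgf_le t
    _ = exp (↑(cX + cY) * t ^ 2 / 2) := by
        rw [← exp_add]; push_cast; ring_nf

end HasSubgaussianMGF

variable {α β : Type*} [MeasurableSpace α] [MeasurableSpace β] {μ : Measure α} {ν : Measure β}
  [IsProbabilityMeasure μ] [IsProbabilityMeasure ν]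

lemma hasSubgaussianMGF_sub_integral_prod {G : α × β → ℝ} {c : ℝ} {cY : ℝ≥0}
    (hG : Measurable G)
    (hsection : ∀ a, HasSubgaussianMGF (fun b => G (a, b) - ∫ b', G (a, b') ∂ν) cY ν)
    (hosc : ∀ a a' b, G (a, b) - G (a', b) ≤ c) :
    HasSubgaussianMGF (fun p => G p - ∫ q, G q ∂(μ.prod ν)) ((‖c‖₊ / 2) ^ 2 + cY) (μ.prod ν) := by
  set m : α → ℝ := fun a => ∫ b, G (a, b) ∂ν
  have hm : Measurable m := hG.stronglyMeasurable.integral_prod_right'.measurable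
  have hGint : ∀ a, Integrable (fun b => G (a, b)) ν := fun a => by
    simpa only [Pi.add_def, sub_add_cancel] using
      (hsection a).integrable.add (integrable_const (∫ b, G (a, b) ∂ν))
  have hmosc : ∀ a a', m a - m a' ≤ c := fun a a' => by
    rw [← integral_sub (hGint a) (hGint a')]
    calc _ ≤ ∫ _, c ∂ν :=
          integral_mono ((hGint a).sub (hGint a')) (integrable_const c) (hosc a a')
      _ = c := by simp
  obtain ⟨a₀, hm_mem⟩ := exists_forall_mem_Icc_of_forall_sub_le hmosc
  have hmean : HasSubgaussianMGF (fun a => m a - ∫ a', m a' ∂μ) ((‖c‖₊ / 2) ^ 2) μ := by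
    simpa using hasSubgaussianMGF_of_mem_Icc hm.aemeasurable (ae_of_all _ hm_mem)
  have hsum : HasSubgaussianMGF (fun p => G p - ∫ a, m a ∂μ) ((‖c‖₊ / 2) ^ 2 + cY) (μ.prod ν) :=
    (hmean.add_prod (Y := fun p => G p - m p.1) (hG.sub (hm.comp measurable_fst)) hsection).congr
      (ae_of_all _ fun p => by ring)
  have hint : Integrable G (μ.prod ν) := by
    simpa only [Pi.add_def, sub_add_cancel] using
      hsum.integrable.add (integrable_const (∫ a, m a ∂μ))
  rwa [integral_prod G hint]

end ProbabilityTheory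

theorem HasBoundedDifferences.hasSubgaussianMGF_sub_integral_pi {n : ℕ} {X : Fin n → Type*}
    [∀ i, MeasurableSpace (X i)] (ν : ∀ i, Measure (X i)) [∀ i, IsProbabilityMeasure (ν i)]
    {f : (∀ i, X i) → ℝ} {c : Fin n → ℝ} (hf : HasBoundedDifferences f c) (hfm : Measurable f) :
    HasSubgaussianMGF (fun x => f x - ∫ y, f y ∂Measure.pi ν) (∑ i, (‖c i‖₊ / 2) ^ 2)
      (Measure.pi ν) := by
  induction n with
  | zero =>
    have hconst : (fun x => f x - ∫ y, f y ∂Measure.pi ν) = fun _ => 0 := by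
      funext x
      rw [integral_unique, Subsingleton.elim x default]
      simp
    simp [hconst]
  | succ n ih =>
    have he := measurePreserving_piFinSuccAbove ν 0
    set e := MeasurableEquiv.piFinSuccAbove X 0
    have hstep := hasSubgaussianMGF_sub_integral_prod (μ := ν 0)
      (ν := Measure.pi fun j => ν (Fin.succAbove 0 j)) (G := f ∘ e.symm) (c := c 0)
      (hfm.comp e.symm.measurable)
      (fun a => ih _ (hf.comp_insertNth 0 a)
        ((hfm.comp e.symm.measurable).comp measurable_prodMk_left))
      (fun a a' w => by
        have := hf (Fin.insertNth 0 a w) 0 a'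
        rw [Fin.update_insertNth] at this
        exact (le_abs_self _).trans this)
    rw [← he.map_eq, integral_map_equiv] at hstep
    convert hstep.of_map e.measurable.aemeasurable using 1
    · funext x
      simp only [Function.comp_apply, MeasurableEquiv.symm_apply_apply]
    · rw [Fin.sum_univ_succAbove _ 0]

/-- McDiarmid's inequality: a function with bounded differences concentrates around
its mean for independent random variables. -/
theorem mcdiarmid_inequality {N : ℕ} {X : Fin N → Type*}
    [mX : ∀ k, MeasurableSpace (X k)]
    {Ω : Type*} [MeasurableSpace Ω] (μ : Measure Ω) [IsProbabilityMeasure μ]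
    (ξ : (k : Fin N) → Ω → X k) (hmeas : ∀ k, Measurable (ξ k))
    (hind : iIndepFun ξ μ)
    (f : ((k : Fin N) → X k) → ℝ) (hf : Measurable f)
    (c : Fin N → ℝ)
    (hbd : ∀ (x : (k : Fin N) → X k) (k : Fin N) (x' : X k),
      |f x - f (Function.update x k x')| ≤ c k)
    (ε : ℝ) (hε : 0 ≤ ε) :
    (μ {ω | ε ≤ |f (fun k => ξ k ω) - ∫ ω', f (fun k => ξ k ω') ∂μ|}).toReal
      ≤ 2 * Real.exp (-2 * ε ^ 2 / ∑ k, (c k) ^ 2) := by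
  have hξ : Measurable fun ω k => ξ k ω := measurable_pi_lambda _ hmeas
  have hlaw : μ.map (fun ω k => ξ k ω) = Measure.pi fun k => μ.map (ξ k) :=
    hind.map_fun_eq_pi_map fun k => (hmeas k).aemeasurable
  have := fun k => Measure.isProbabilityMeasure_map (μ := μ) (hmeas k).aemeasurable
  have hsubG :=
    HasBoundedDifferences.hasSubgaussianMGF_sub_integral_pi (fun k => μ.map (ξ k)) hbd hf
  rw [← hlaw, integral_map hξ.aemeasurable hf.aestronglyMeasurable] at hsubG
  calc _ ≤ 2 * exp (-ε ^ 2 / (2 * ((∑ k, (‖c k‖₊ / 2) ^ 2 : ℝ≥0) : ℝ))) :=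
        (hsubG.of_map hξ.aemeasurable).measure_abs_ge_le hε
    _ = 2 * exp (-2 * ε ^ 2 / ∑ k, c k ^ 2) := by
      simp only [NNReal.coe_sum, NNReal.coe_pow, NNReal.coe_div, coe_nnnorm, Real.norm_eq_abs,
        div_pow, sq_abs, NNReal.coe_ofNat, ← Finset.sum_div]
      ring_nf
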